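/- Let α, β ∈ ℂ and let x ∈ ℂ with x ∉ (−∞, 0] (i.e. −π < arg x < π). Then lim_{q→1⁻} [θ_q(q^α x/(1−q)) / θ_q(q^β x/(1−q))] · (1−q)^{β−α} = x^{β−α}, where q^α = exp(α log q), (1−q)^{β−α} = exp((β−α) log(1−q)), and x^{β−α} = exp((β−α) Log x) with the principal logarithm. -/

import Mathlib

/-!
Write `L = log q`. Termwise, `θ_q(e^w)` is Jacobi's `θ₂((w - L/2)/(2πi), L/(2πi))`, and the
modular transformation `τ ↦ -1/τ` turns it into a constant times the Gaussian
`exp(-(w - L/2)²/(2L))` times `θ₂((w - L/2)/L, -2πi/L)`. For `w = γL + log x - log(1-q)` the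
Gaussians of numerator and denominator have ratio `exp((β-α)((α+β-1)L/2 + log x - log(1-q)))`,
which the factor `(1-q)^{β-α}` turns into `x^{β-α} + o(1)`. Both transformed theta values tend
to `1`: the imaginary part of `-2πi/L` is `2π/|L|`, while that of the first argument is
`Im γ + arg x / L`, and `|arg x| < π` leaves the margin `2(π - |arg x|)/|L| → ∞` in the
convergence condition of the theta series.
-/

open Complex Filter Topology

/-- The q-shifted factorial `(a;q)_n`. -/
noncomputable def qPoch (q a : ℂ) (n : ℕ) : ℂ := ∏ k ∈ Finset.range n, (1 - a * q ^ k)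

/-- The infinite q-shifted factorial `(a;q)_∞`. -/
noncomputable def qPochInf (q a : ℂ) : ℂ := ∏' k : ℕ, (1 - a * q ^ k)

/-- The Jacobi theta function `θ_q(x) = Σ_{n∈ℤ} q^{n(n-1)/2} x^n`. -/
noncomputable def jTheta (q : ℝ) (x : ℂ) : ℂ := ∑' n : ℤ, (q : ℂ) ^ (n * (n - 1) / 2) * x ^ n

/-- The basic hypergeometric series `₃φ₂(a₁,a₂,a₃;b₁,b₂;q,x)`. -/
noncomputable def phi32 (q a₁ a₂ a₃ b₁ b₂ x : ℂ) : ℂ :=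
  ∑' n : ℕ, (qPoch q a₁ n * qPoch q a₂ n * qPoch q a₃ n) /
    (qPoch q b₁ n * qPoch q b₂ n * qPoch q q n) * x ^ n

/-- The basic hypergeometric series `₂φ₂(a₁,a₂;b₁,b₂;q,x)`. -/
noncomputable def phi22 (q a₁ a₂ b₁ b₂ x : ℂ) : ℂ :=
  ∑' n : ℕ, (qPoch q a₁ n * qPoch q a₂ n) /
    (qPoch q b₁ n * qPoch q b₂ n * qPoch q q n) * (-1) ^ n * q ^ (n * (n - 1) / 2) * x ^ n

/-- The complex power `q^α := exp(α log q)` for a real base `q`. -/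
noncomputable def qcpow (q : ℝ) (α : ℂ) : ℂ := Complex.exp (α * (Real.log q : ℂ))

section

open Real

lemma norm_jacobiTheta₂_term_le_pow {z τ : ℂ} (h : 2 * |z.im| ≤ τ.im) (n : ℤ) :
    ‖jacobiTheta₂_term n z τ‖ ≤ rexp (-π * (τ.im - 2 * |z.im|)) ^ n.natAbs := by
  rw [norm_jacobiTheta₂_term, ← Real.exp_nat_mul, Real.exp_le_exp, Nat.cast_natAbs,
    Int.cast_abs]
  have hn : |(n : ℝ)| ≤ (n : ℝ) ^ 2 := by
    exact_mod_cast (Int.natCast_natAbs n ▸ Int.natAbs_le_self_sq n)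
  have hz : -((n : ℝ) * z.im) ≤ |(n : ℝ)| * |z.im| := by
    rw [← abs_mul]; exact neg_le_abs _
  have hτ : 0 ≤ τ.im := by linarith [abs_nonneg z.im]
  nlinarith [mul_le_mul_of_nonneg_left hn hτ, pi_pos]

lemma hasSum_pow_natAbs {r : ℝ} (hr₀ : 0 ≤ r) (hr₁ : r < 1) :
    HasSum (fun n : ℤ ↦ r ^ n.natAbs) ((1 + r) / (1 - r)) := by
  have hgeom := hasSum_geometric_of_lt_one hr₀ hr₁
  have hsum : (1 + r) / (1 - r) = (1 - r)⁻¹ + (1 - r)⁻¹ - r ^ (0 : ℤ).natAbs := by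
    have : 1 - r ≠ 0 := by linarith
    field_simp
    ring
  rw [hsum]
  exact .of_nat_of_neg (by simpa using hgeom) (by simpa using hgeom)

lemma norm_jacobiTheta₂_sub_one_le {z τ : ℂ} (h : 2 * |z.im| < τ.im) :
    ‖jacobiTheta₂ z τ - 1‖ ≤
      2 * rexp (-π * (τ.im - 2 * |z.im|)) / (1 - rexp (-π * (τ.im - 2 * |z.im|))) := by
  have hτ : 0 < τ.im := by linarith [abs_nonneg z.im]
  have hr₁ : rexp (-π * (τ.im - 2 * |z.im|)) < 1 :=
    Real.exp_lt_one_iff.mpr (by nlinarith [pi_pos])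
  have hθ := (hasSum_jacobiTheta₂_term z hτ).update 0 0
  have hbound := (hasSum_pow_natAbs (Real.exp_pos _).le hr₁).update 0 0
  have := hθ.norm_le_of_bounded hbound fun n ↦ by
    rcases eq_or_ne n 0 with rfl | hn
    · simp
    · simpa [Function.update_of_ne hn] using norm_jacobiTheta₂_term_le_pow h.le n
  convert this using 1
  · simp [jacobiTheta₂, jacobiTheta₂_term, sub_eq_neg_add]
  · generalize rexp (-π * (τ.im - 2 * |z.im|)) = r at hr₁ ⊢
    have : 1 - r ≠ 0 := by linarith
    simp only [Int.natAbs_zero, pow_zero]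
    field_simp
    ring

lemma tendsto_jacobiTheta₂_nhds_one {ι : Type*} {l : Filter ι} {z τ : ι → ℂ}
    (h : Tendsto (fun i ↦ (τ i).im - 2 * |(z i).im|) l atTop) :
    Tendsto (fun i ↦ jacobiTheta₂ (z i) (τ i)) l (𝓝 1) := by
  have hr : Tendsto (fun i ↦ rexp (-π * ((τ i).im - 2 * |(z i).im|))) l (𝓝 0) :=
    tendsto_exp_atBot.comp (h.const_mul_atTop_of_neg (neg_lt_zero.mpr pi_pos))
  have hbound : Tendsto (fun i ↦ 2 * rexp (-π * ((τ i).im - 2 * |(z i).im|)) /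
      (1 - rexp (-π * ((τ i).im - 2 * |(z i).im|)))) l (𝓝 0) := by
    have := (hr.const_mul 2).div (tendsto_const_nhds.sub hr) (by norm_num : (1 : ℝ) - 0 ≠ 0)
    rwa [mul_zero, sub_zero, zero_div] at this
  rw [← tendsto_sub_nhds_zero_iff]
  refine squeeze_zero_norm' ?_ hbound
  filter_upwards [h.eventually_gt_atTop 0] with i hi
  exact norm_jacobiTheta₂_sub_one_le (by linarith)

lemma tendsto_jacobiTheta₂_div_of_tendsto_nhdsLT_zero {ι : Type*} {l : Filter ι} {t : ι → ℝ}
    (ht : Tendsto t l (𝓝[<] 0)) {z : ι → ℂ} {a b : ℝ} (hb : b < π)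
    (hz : ∀ᶠ i in l, |(z i).im| ≤ a - b / t i) :
    Tendsto (fun i ↦ jacobiTheta₂ (z i) (-2 * π * I / t i)) l (𝓝 1) := by
  have hinv : Tendsto (fun i ↦ -(t i)⁻¹) l atTop :=
    tendsto_neg_atBot_atTop.comp ht.inv_tendsto_nhdsLT_zero
  refine tendsto_jacobiTheta₂_nhds_one (tendsto_atTop_mono' l ?_
    ((hinv.const_mul_atTop (by linarith : 0 < 2 * (π - b))).atTop_add
      (tendsto_const_nhds (x := -2 * a))))
  filter_upwards [hz, ht self_mem_nhdsWithin] with i hzi (hti : t i < 0)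
  have him : (-2 * π * I / t i).im = 2 * (π - b) * -(t i)⁻¹ - 2 * (b / t i) := by
    rw [show -2 * π * I / t i = ((-2 * π / t i : ℝ) : ℂ) * I by push_cast; ring, im_ofReal_mul,
      I_im]
    field_simp
    ring
  simp only [him]
  linarith

lemma jTheta_cexp_eq_jacobiTheta₂ {q : ℝ} (hq : 0 < q) (w : ℂ) :
    jTheta q (cexp w) =
      jacobiTheta₂ ((w - Real.log q / 2) / (2 * π * I)) (Real.log q / (2 * π * I)) := by
  refine tsum_congr fun n ↦ ?_
  have hexp : ((n * (n - 1) / 2 : ℤ) : ℂ) = n * (n - 1) / 2 := by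
    rw [Int.cast_div n.even_mul_pred_self.two_dvd (by norm_num)]
    push_cast
    ring
  have hq' : (q : ℂ) = cexp (Real.log q) := by rw [← ofReal_exp, Real.exp_log hq]
  rw [jacobiTheta₂_term, hq', ← exp_int_mul, ← exp_int_mul, ← Complex.exp_add, hexp]
  congr 1
  field_simp
  ring

lemma jTheta_cexp_eq_mul_jacobiTheta₂ {q : ℝ} (hq₀ : 0 < q) (hq₁ : q ≠ 1) (w : ℂ) :
    jTheta q (cexp w) = 1 / (-Real.log q / (2 * π) : ℂ) ^ (1 / 2 : ℂ) *
      cexp (-(w - Real.log q / 2) ^ 2 / (2 * Real.log q)) *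
      jacobiTheta₂ ((w - Real.log q / 2) / Real.log q) (-2 * π * I / Real.log q) := by
  have hL : (Real.log q : ℂ) ≠ 0 := ofReal_ne_zero.mpr (Real.log_ne_zero_of_pos_of_ne_one hq₀ hq₁)
  have hτ : -I * (Real.log q / (2 * π * I)) = -Real.log q / (2 * π) := by field_simp
  have hexp : -π * I * ((w - Real.log q / 2) / (2 * π * I)) ^ 2 / (Real.log q / (2 * π * I)) =
      -(w - Real.log q / 2) ^ 2 / (2 * Real.log q) := by
    field_simp
  have hz : (w - Real.log q / 2) / (2 * π * I) / (Real.log q / (2 * π * I)) =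
      (w - Real.log q / 2) / Real.log q := by
    field_simp
  have hσ : -1 / (Real.log q / (2 * π * I)) = -2 * π * I / Real.log q := by field_simp
  rw [jTheta_cexp_eq_jacobiTheta₂ hq₀, jacobiTheta₂_functional_equation, hτ, hexp, hz, hσ]

lemma jTheta_cexp_div_jTheta_cexp {q : ℝ} (hq₀ : 0 < q) (hq₁ : q ≠ 1) (α β c : ℂ) :
    jTheta q (cexp (α * Real.log q + c)) / jTheta q (cexp (β * Real.log q + c)) =
      cexp ((β - α) * ((α + β - 1) / 2 * Real.log q + c)) *
        (jacobiTheta₂ (α + c / Real.log q - 1 / 2) (-2 * π * I / Real.log q) /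
          jacobiTheta₂ (β + c / Real.log q - 1 / 2) (-2 * π * I / Real.log q)) := by
  have hL : (Real.log q : ℂ) ≠ 0 := ofReal_ne_zero.mpr (Real.log_ne_zero_of_pos_of_ne_one hq₀ hq₁)
  have hC : (-Real.log q / (2 * π) : ℂ) ^ (1 / 2 : ℂ) ≠ 0 :=
    (cpow_ne_zero_iff_of_exponent_ne_zero (by norm_num)).mpr (by simpa [pi_ne_zero] using hL)
  simp only [jTheta_cexp_eq_mul_jacobiTheta₂ hq₀ hq₁, mul_div_mul_comm,
    div_self (one_div_ne_zero hC), one_mul, ← Complex.exp_sub]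
  congr 2
  · field_simp
    ring
  all_goals congr 1; field_simp

lemma qcpow_mul_div_one_sub_eq_cexp {q : ℝ} (hq : q < 1) (γ : ℂ) {x : ℂ} (hx : x ≠ 0) :
    qcpow q γ * x / (1 - q) = cexp (γ * Real.log q + (log x - Real.log (1 - q))) := by
  have h1q : cexp (Real.log (1 - q)) = 1 - q := by
    rw [← ofReal_exp, Real.exp_log (sub_pos.mpr hq), ofReal_sub, ofReal_one]
  rw [add_sub, Complex.exp_sub, Complex.exp_add, exp_log hx, h1q, qcpow]

lemma Real.tendsto_log_nhdsWithin_Ioo_one :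
    Tendsto Real.log (𝓝[Set.Ioo 0 1] 1) (𝓝[<] 0) := by
  refine tendsto_nhdsWithin_iff.mpr ⟨?_, ?_⟩
  · simpa using (continuousAt_log one_ne_zero).tendsto.mono_left nhdsWithin_le_nhds
  · filter_upwards [self_mem_nhdsWithin] with q hq using log_neg hq.1 hq.2

lemma tendsto_jacobiTheta₂_log_of_mem_slitPlane (γ : ℂ) {x : ℂ} (hx : x ∈ slitPlane) :
    Tendsto (fun q : ℝ ↦ jacobiTheta₂ (γ + (log x - Real.log (1 - q)) / Real.log q - 1 / 2)
      (-2 * π * I / Real.log q)) (𝓝[Set.Ioo 0 1] 1) (𝓝 1) := by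
  have harg : |arg x| < π :=
    abs_lt.mpr ⟨neg_pi_lt_arg x, (arg_le_pi x).lt_of_ne (slitPlane_arg_ne_pi hx)⟩
  refine tendsto_jacobiTheta₂_div_of_tendsto_nhdsLT_zero (a := |γ.im|)
    tendsto_log_nhdsWithin_Ioo_one harg ?_
  filter_upwards [self_mem_nhdsWithin] with q ⟨hq₀, hq₁⟩
  have hL : Real.log q < 0 := log_neg hq₀ hq₁
  simp only [sub_im, add_im, div_ofReal_im, log_im, ofReal_im, sub_zero]
  calc |γ.im + arg x / Real.log q - (1 / 2 : ℂ).im| ≤ |γ.im| + |arg x / Real.log q| := by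
        simpa using abs_add_le γ.im (arg x / Real.log q)
    _ = |γ.im| - |arg x| / Real.log q := by
        rw [abs_div, abs_of_neg hL, div_neg, sub_eq_add_neg]

end

/-- for `-π < arg x < π`,
`[θ_q(q^α x/(1-q)) / θ_q(q^β x/(1-q))] · (1-q)^{β-α} → x^{β-α}` as `q → 1⁻`. -/
theorem jTheta_ratio_scaled_tendsto (α β : ℂ) (x : ℂ) (hx : x ∈ Complex.slitPlane) :
    Tendsto
      (fun q : ℝ =>
        jTheta q (qcpow q α * x / (1 - (q : ℂ))) / jTheta q (qcpow q β * x / (1 - (q : ℂ))) *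
          Complex.exp ((β - α) * (Real.log (1 - q) : ℂ)))
      (𝓝[Set.Ioo (0 : ℝ) 1] 1) (𝓝 (x ^ (β - α))) := by
  have hx₀ := slitPlane_ne_zero hx
  have hlog : Tendsto (fun q : ℝ ↦ cexp ((β - α) * (α + β - 1) / 2 * Real.log q))
      (𝓝[Set.Ioo 0 1] 1) (𝓝 1) := by
    have hlog₀ := (continuous_ofReal.tendsto 0).comp
      (tendsto_nhdsWithin_iff.mp Real.tendsto_log_nhdsWithin_Ioo_one).1
    simpa using (hlog₀.const_mul ((β - α) * (α + β - 1) / 2)).cexp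
  have hlim := (hlog.mul_const (x ^ (β - α))).mul
    ((tendsto_jacobiTheta₂_log_of_mem_slitPlane α hx).div
      (tendsto_jacobiTheta₂_log_of_mem_slitPlane β hx) one_ne_zero)
  rw [one_mul, one_div_one, mul_one] at hlim
  refine hlim.congr' ?_
  filter_upwards [self_mem_nhdsWithin] with q ⟨hq₀, hq₁⟩
  rw [qcpow_mul_div_one_sub_eq_cexp hq₁ α hx₀, qcpow_mul_div_one_sub_eq_cexp hq₁ β hx₀,
    jTheta_cexp_div_jTheta_cexp hq₀ hq₁.ne, cpow_def_of_ne_zero hx₀, Pi.div_apply,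
    ← Complex.exp_add, mul_right_comm (cexp _) (_ / _), ← Complex.exp_add]
  congr 2
  ring
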